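/- arXiv:2103.10172 — 3 statements merged into one kernel-verified Lean document; each statement's English description precedes it below -/
import Mathlib

section
/- If G is a finite simple graph and I is the set of isolated vertices of G, then the union, over all Z-Grundy dominating sequences S of G, of the vertex sets of S equals V(G) \ I. -/
/-!
Let `v` be a maximum Z-sequence with footprints `w` and let `x` be a non-isolated vertex.
If `x = w t` is a footprint, reading the pairs backwards with the roles of vertex and footprint
exchanged gives a Z-sequence of the same length through `x`. Otherwise `x` cannot be appended to
`v`, so there is a first `i` with `N(x) ⊆ N[v 0] ∪ ⋯ ∪ N[v i]`; replacing `v i` by `x` keeps the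
footprints `w p`, `p > i`, valid, because they avoid `N[v i]` and hence also `N(x)`.
-/

/-- A Z-sequence in a graph `G`: a list of distinct vertices such that each vertex
has a neighbor not contained in the closed neighborhood of any earlier vertex. -/
def IsZSeq {V : Type*} (G : SimpleGraph V) (l : List V) : Prop :=
  l.Nodup ∧ ∀ i : Fin l.length, ∃ w : V, G.Adj (l.get i) w ∧
    ∀ j : Fin l.length, (j : ℕ) < (i : ℕ) → w ≠ l.get j ∧ ¬ G.Adj (l.get j) w

/-- A Z-Grundy dominating sequence: a Z-sequence of maximum length. -/
def IsZGrundySeq {V : Type*} (G : SimpleGraph V) (l : List V) : Prop :=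
  IsZSeq G l ∧ ∀ l' : List V, IsZSeq G l' → l'.length ≤ l.length

theorem Nat.exists_lt_and_not_succ {P : ℕ → Prop} {n : ℕ} (h0 : P 0) (hn : ¬ P n) :
    ∃ i < n, P i ∧ ¬ P (i + 1) := by
  induction n with
  | zero => exact absurd h0 hn
  | succ n ih =>
    by_cases h : P n
    · exact ⟨n, n.lt_succ_self, h, hn⟩
    · obtain ⟨i, hi, hPi, hPi'⟩ := ih h
      exact ⟨i, by omega, hPi, hPi'⟩

namespace SimpleGraph

variable {V : Type*} (G : SimpleGraph V) {k : ℕ}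

/-- `x ∉ N[v 0] ∪ ⋯ ∪ N[v (n - 1)]`. -/
def IsFresh (v : Fin k → V) (n : ℕ) (x : V) : Prop :=
  ∀ j : Fin k, (j : ℕ) < n → x ≠ v j ∧ ¬ G.Adj (v j) x

/-- `v i` footprints `w i` for every `i`, in the terminology of Z-Grundy domination. -/
def ZFootprints (v w : Fin k → V) : Prop :=
  ∀ i, G.Adj (v i) (w i) ∧ G.IsFresh v i (w i)

variable {G}

theorem IsFresh.mono {v : Fin k → V} {m n : ℕ} {x : V} (h : G.IsFresh v n x) (hmn : m ≤ n) :
    G.IsFresh v m x :=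
  fun j hj => h j (hj.trans_le hmn)

namespace ZFootprints

variable {v w : Fin k → V}

theorem injective (h : G.ZFootprints v w) : Function.Injective v := by
  intro i j hij
  by_contra hne
  rcases lt_or_gt_of_ne hne with hlt | hlt
  · exact ((h j).2 i hlt).2 (hij ▸ (h j).1)
  · exact ((h i).2 j hlt).2 (hij ▸ (h i).1)

theorem rev_swap (h : G.ZFootprints v w) : G.ZFootprints (w ∘ Fin.rev) (v ∘ Fin.rev) := by
  refine fun i => ⟨(h i.rev).1.symm, fun j hj => ?_⟩
  have := (h j.rev).2 i.rev (Fin.rev_lt_rev.mpr hj)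
  exact ⟨this.1.symm, fun hadj => this.2 hadj.symm⟩

theorem snoc (h : G.ZFootprints v w) {x y : V} (hxy : G.Adj x y) (hy : G.IsFresh v k y) :
    G.ZFootprints (Fin.snoc v x : Fin (k + 1) → V) (Fin.snoc w y : Fin (k + 1) → V) := by
  intro i
  induction i using Fin.lastCases with
  | last =>
    refine ⟨by simpa using hxy, fun j hj => ?_⟩
    induction j using Fin.lastCases with
    | last => exact absurd hj (lt_irrefl _)
    | cast j => simpa using hy j j.isLt
  | cast i =>
    refine ⟨by simpa using (h i).1, fun j hj => ?_⟩
    induction j using Fin.lastCases with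
    | last => exact absurd hj (by simp)
    | cast j => simpa using (h i).2 j hj

theorem update {i : Fin k} {x y : V} (h : G.ZFootprints v w) (hxy : G.Adj x y)
    (hy : G.IsFresh v i y) (hdom : ∀ z, G.Adj x z → ¬ G.IsFresh v (i + 1) z)
    (hxw : x ∉ Set.range w) :
    G.ZFootprints (Function.update v i x) (Function.update w i y) := by
  intro p
  by_cases hpi : p = i
  · subst hpi
    refine ⟨by simpa using hxy, fun j hj => ?_⟩
    simpa [Fin.ne_of_lt hj] using hy j hj
  · refine ⟨by simpa [hpi] using (h p).1, fun j hj => ?_⟩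
    by_cases hji : j = i
    · subst hji
      refine ⟨by simpa [hpi] using fun he => hxw ⟨p, he⟩, ?_⟩
      simpa [hpi] using fun hadj => hdom _ hadj ((h p).2.mono (Nat.succ_le_of_lt hj))
    · simpa [hpi, hji] using (h p).2 j hj

theorem exists_mem_range_of_adj (h : G.ZFootprints v w)
    (hmax : ∀ v' w' : Fin (k + 1) → V, ¬ G.ZFootprints v' w') {x y : V} (hxy : G.Adj x y) :
    ∃ v' w' : Fin k → V, G.ZFootprints v' w' ∧ x ∈ Set.range v' := by
  by_cases hxw : x ∈ Set.range w
  · obtain ⟨t, rfl⟩ := hxw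
    exact ⟨_, _, h.rev_swap, t.rev, by simp⟩
  let HasFreshNeighbor (n : ℕ) : Prop := ∃ z, G.Adj x z ∧ G.IsFresh v n z
  have h0 : HasFreshNeighbor 0 := ⟨y, hxy, fun j hj => absurd hj (Nat.not_lt_zero _)⟩
  have hk : ¬ HasFreshNeighbor k := fun ⟨z, hxz, hz⟩ => hmax _ _ (h.snoc hxz hz)
  obtain ⟨i, hik, ⟨z, hxz, hz⟩, hdom⟩ := Nat.exists_lt_and_not_succ h0 hk
  exact ⟨_, _, h.update (i := ⟨i, hik⟩) hxz hz (fun z' hxz' hz' => hdom ⟨z', hxz', hz'⟩) hxw,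
    ⟨i, hik⟩, by simp⟩

theorem isZSeq_ofFn (h : G.ZFootprints v w) : IsZSeq G (List.ofFn v) := by
  refine ⟨List.nodup_ofFn.mpr h.injective, fun i => ?_⟩
  simp only [List.get_ofFn]
  exact ⟨w _, (h _).1, fun j hj => (h _).2 _ hj⟩

end ZFootprints
end SimpleGraph

section

variable {V : Type*} {G : SimpleGraph V} {l : List V}

theorem IsZSeq.exists_zFootprints (hl : IsZSeq G l) : ∃ w, G.ZFootprints l.get w :=
  Classical.skolem.mp hl.2

theorem IsZSeq.exists_adj_of_mem (hl : IsZSeq G l) {x : V} (hx : x ∈ l) : ∃ y, G.Adj x y := by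
  obtain ⟨i, rfl⟩ := List.get_of_mem hx
  obtain ⟨y, hy, -⟩ := hl.2 i
  exact ⟨y, hy⟩

theorem IsZGrundySeq.ofFn (hl : IsZGrundySeq G l) {v w : Fin l.length → V}
    (h : G.ZFootprints v w) : IsZGrundySeq G (List.ofFn v) :=
  ⟨h.isZSeq_ofFn, fun l' hl' => by simpa using hl.2 l' hl'⟩

variable (G) in
theorem exists_isZGrundySeq [Finite V] : ∃ l, IsZGrundySeq G l := by
  have := Fintype.ofFinite V
  let lengths := {n | ∃ l, IsZSeq G l ∧ l.length = n}
  have hne : lengths.Nonempty := ⟨0, [], ⟨List.nodup_nil, nofun⟩, rfl⟩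
  have hbdd : BddAbove lengths :=
    ⟨Fintype.card V, by rintro _ ⟨l, hl, rfl⟩; exact hl.1.length_le_card⟩
  obtain ⟨l, hl, hlen⟩ := Nat.sSup_mem hne hbdd
  exact ⟨l, hl, fun l' hl' => hlen ▸ le_csSup hbdd ⟨l', hl', rfl⟩⟩

end

/-- The union, over all Z-Grundy dominating sequences of `G`, of their vertex sets
equals the set of all vertices minus the set of isolated vertices. -/
theorem union_ZGrundySeq_eq_nonisolated {V : Type*} [Fintype V] (G : SimpleGraph V) :
    {x : V | ∃ l : List V, IsZGrundySeq G l ∧ x ∈ l}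
      = Set.univ \ {v : V | ∀ w : V, ¬ G.Adj v w} := by
  ext x
  simp only [Set.mem_ofPred_eq, Set.mem_sdiff, Set.mem_univ, true_and, not_forall, not_not]
  constructor
  · rintro ⟨l, hl, hx⟩
    exact hl.1.exists_adj_of_mem hx
  · rintro ⟨y, hxy⟩
    obtain ⟨L, hL⟩ := exists_isZGrundySeq G
    obtain ⟨w, hw⟩ := hL.1.exists_zFootprints
    have hmax : ∀ v' w' : Fin (L.length + 1) → V, ¬ G.ZFootprints v' w' :=
      fun v' w' h => by simpa using hL.2 _ h.isZSeq_ofFn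
    obtain ⟨v', w', h', hx⟩ := hw.exists_mem_range_of_adj hmax hxy
    exact ⟨_, hL.ofFn h', (List.mem_ofFn' _ _).mpr hx⟩
end

section
/- If G is a finite simple graph, then the union, over all Grundy dominating sequences S of G, of the vertex sets of S equals V(G). -/
/-! Start from any Grundy dominating sequence `l` and a vertex `x`. By maximality `l ++ [x]` is
not a closed neighborhood sequence, so `N[x]` is covered by the closed neighborhoods of `l`. Let
`p` be the first position with `N[x] ⊆ N[l₀] ∪ ⋯ ∪ N[lₚ]`, and replace `lₚ` by `x`. The vertices
before `p` are untouched; `x` footprints a vertex of `N[x]` missed by `l₀, …, lₚ₋₁`; and every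
later vertex keeps its footprint, because what `x` dominates was already dominated by
`l₀, …, lₚ`. The result is a closed neighborhood sequence of the same, maximal, length
containing `x`. -/

/-- A closed neighborhood sequence in `G`: a list of distinct vertices such that each
vertex footprints some vertex of its closed neighborhood not contained in the closed
neighborhood of any earlier vertex. -/
def IsClosedNbrSeq {V : Type*} (G : SimpleGraph V) (l : List V) : Prop :=
  l.Nodup ∧ ∀ i : Fin l.length, ∃ w : V, (w = l.get i ∨ G.Adj (l.get i) w) ∧
    ∀ j : Fin l.length, (j : ℕ) < (i : ℕ) → w ≠ l.get j ∧ ¬ G.Adj (l.get j) w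

/-- A Grundy dominating sequence: a closed neighborhood sequence of maximum length. -/
def IsGrundyDomSeq {V : Type*} (G : SimpleGraph V) (l : List V) : Prop :=
  IsClosedNbrSeq G l ∧ ∀ l' : List V, IsClosedNbrSeq G l' → l'.length ≤ l.length

namespace SimpleGraph

variable {V : Type*} (G : SimpleGraph V)

def closedNeighborSet (v : V) : Set V := insert v (G.neighborSet v)

def closedNeighborSetOfList (l : List V) : Set V := ⋃ v ∈ l, G.closedNeighborSet v

variable {G}

@[simp]
lemma mem_closedNeighborSet {v w : V} : w ∈ G.closedNeighborSet v ↔ w = v ∨ G.Adj v w :=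
  Iff.rfl

lemma self_mem_closedNeighborSet (v : V) : v ∈ G.closedNeighborSet v := Or.inl rfl

lemma mem_closedNeighborSetOfList {l : List V} {w : V} :
    w ∈ G.closedNeighborSetOfList l ↔ ∃ v ∈ l, w ∈ G.closedNeighborSet v := by
  simp only [closedNeighborSetOfList, Set.mem_iUnion, exists_prop]

@[simp]
lemma closedNeighborSetOfList_nil : G.closedNeighborSetOfList [] = ∅ := by
  simp [closedNeighborSetOfList]

lemma closedNeighborSetOfList_mono {l₁ l₂ : List V} (h : l₁ ⊆ l₂) :
    G.closedNeighborSetOfList l₁ ⊆ G.closedNeighborSetOfList l₂ :=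
  Set.iUnion₂_subset fun _ hv => Set.subset_biUnion_of_mem (u := G.closedNeighborSet) (h hv)

lemma closedNeighborSetOfList_set_subset {l : List V} {x : V}
    (hx : G.closedNeighborSet x ⊆ G.closedNeighborSetOfList l) (p : ℕ) :
    G.closedNeighborSetOfList (l.set p x) ⊆ G.closedNeighborSetOfList l := by
  refine Set.iUnion₂_subset fun v hv => ?_
  rcases List.mem_or_eq_of_mem_set hv with hv | rfl
  · exact Set.subset_biUnion_of_mem (u := G.closedNeighborSet) hv
  · exact hx

lemma exists_not_subset_take_and_subset_take_succ {S : Set V} (hS : S.Nonempty) {l : List V}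
    (h : S ⊆ G.closedNeighborSetOfList l) :
    ∃ p < l.length, ¬ S ⊆ G.closedNeighborSetOfList (l.take p) ∧
      S ⊆ G.closedNeighborSetOfList (l.take (p + 1)) := by
  obtain ⟨p, hp, hp_succ⟩ := Nat.exists_not_and_succ_of_not_zero_of_exists
    (p := fun n => S ⊆ G.closedNeighborSetOfList (l.take n))
    (by simpa [Set.subset_empty_iff] using hS.ne_empty) ⟨l.length, by simpa using h⟩
  refine ⟨p, lt_of_not_ge fun hle => hp ?_, hp, hp_succ⟩
  simpa only [List.take_of_length_le hle, List.take_of_length_le (by omega : l.length ≤ p + 1)]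
    using hp_succ

end SimpleGraph

open SimpleGraph

section ClosedNbrSeq

variable {V : Type*} {G : SimpleGraph V} {l : List V}

lemma isClosedNbrSeq_iff : IsClosedNbrSeq G l ↔ ∀ i (hi : i < l.length),
    ¬ G.closedNeighborSet l[i] ⊆ G.closedNeighborSetOfList (l.take i) := by
  have mem_take {i j : ℕ} (hj : j < l.length) (hji : j < i) : l[j] ∈ l.take i :=
    List.mem_take_iff_getElem.2 ⟨j, by omega, rfl⟩
  constructor
  · rintro ⟨-, h⟩ i hi hsub
    obtain ⟨w, hw, hfresh⟩ := h ⟨i, hi⟩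
    obtain ⟨v, hv, hwv⟩ := mem_closedNeighborSetOfList.1 (hsub hw)
    obtain ⟨j, hj, rfl⟩ := List.mem_take_iff_getElem.1 hv
    obtain ⟨hne, hnadj⟩ := hfresh ⟨j, by omega⟩ (by simp; omega)
    exact hwv.elim hne hnadj
  · intro h
    refine ⟨List.pairwise_iff_getElem.2 fun j i hj hi hji heq => h i hi ?_, fun i => ?_⟩
    · rw [← heq]
      exact fun w hw => mem_closedNeighborSetOfList.2 ⟨l[j], mem_take hj hji, hw⟩
    · obtain ⟨w, hw, hnot⟩ := Set.not_subset.1 (h i i.2)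
      refine ⟨w, hw, fun j hji => ?_⟩
      have hnot' := fun hj => hnot (mem_closedNeighborSetOfList.2 ⟨_, mem_take j.2 hji, hj⟩)
      simpa [not_or] using hnot'

lemma IsClosedNbrSeq.nil : IsClosedNbrSeq G [] := isClosedNbrSeq_iff.2 (by simp)

lemma IsClosedNbrSeq.concat (hl : IsClosedNbrSeq G l) {x : V}
    (hx : ¬ G.closedNeighborSet x ⊆ G.closedNeighborSetOfList l) :
    IsClosedNbrSeq G (l ++ [x]) := by
  rw [isClosedNbrSeq_iff] at hl ⊢
  intro i hi
  rw [List.length_append, List.length_singleton] at hi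
  rcases Nat.lt_succ_iff_lt_or_eq.1 hi with hi | rfl
  · rw [List.getElem_append_left hi, List.take_append_of_le_length hi.le]
    exact hl i hi
  · rwa [List.getElem_concat_length rfl, List.take_left]

lemma IsClosedNbrSeq.set (hl : IsClosedNbrSeq G l) {p : ℕ} {x : V}
    (hfresh : ¬ G.closedNeighborSet x ⊆ G.closedNeighborSetOfList (l.take p))
    (hcov : G.closedNeighborSet x ⊆ G.closedNeighborSetOfList (l.take (p + 1))) :
    IsClosedNbrSeq G (l.set p x) := by
  rw [isClosedNbrSeq_iff] at hl ⊢
  intro i hi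
  have hil : i < l.length := l.length_set .. ▸ hi
  rw [List.take_set, List.getElem_set]
  rcases lt_trichotomy i p with hip | rfl | hpi
  · rw [if_neg hip.ne', List.set_eq_of_length_le (l := l.take i) (by simp; omega)]
    exact hl i hil
  · rwa [if_pos rfl, List.set_eq_of_length_le (l := l.take i) (by simp)]
  · rw [if_neg hpi.ne]
    have hcov' := hcov.trans (closedNeighborSetOfList_mono (List.take_subset_take_left l hpi))
    exact fun hsub => hl i hil (hsub.trans (closedNeighborSetOfList_set_subset hcov' p))

end ClosedNbrSeq

section GrundyDomSeq

variable {V : Type*} {G : SimpleGraph V} {l : List V}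

lemma exists_isGrundyDomSeq [Fintype V] (G : SimpleGraph V) : ∃ l, IsGrundyDomSeq G l := by
  let lengths : Set ℕ := {n | ∃ l, IsClosedNbrSeq G l ∧ l.length = n}
  have hne : lengths.Nonempty := ⟨0, [], IsClosedNbrSeq.nil, rfl⟩
  have hbdd : BddAbove lengths := ⟨Fintype.card V, by
    rintro _ ⟨l, hl, rfl⟩
    exact hl.1.length_le_card⟩
  obtain ⟨l, hl, hlen⟩ := Nat.sSup_mem hne hbdd
  exact ⟨l, hl, fun l' hl' => hlen ▸ le_csSup hbdd ⟨l', hl', rfl⟩⟩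

lemma IsGrundyDomSeq.closedNeighborSet_subset (hl : IsGrundyDomSeq G l) (x : V) :
    G.closedNeighborSet x ⊆ G.closedNeighborSetOfList l := by
  by_contra hx
  simpa using hl.2 _ (hl.1.concat hx)

lemma IsGrundyDomSeq.set (hl : IsGrundyDomSeq G l) {p : ℕ} {x : V}
    (hl' : IsClosedNbrSeq G (l.set p x)) : IsGrundyDomSeq G (l.set p x) :=
  ⟨hl', by simpa using hl.2⟩

end GrundyDomSeq

/-- The union, over all Grundy dominating sequences of a finite graph `G`, of their
vertex sets equals the whole vertex set of `G`. -/
theorem union_grundyDomSeq_eq_univ {V : Type*} [Fintype V] (G : SimpleGraph V) :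
    {x : V | ∃ l : List V, IsGrundyDomSeq G l ∧ x ∈ l} = Set.univ := by
  refine Set.eq_univ_of_forall fun x => ?_
  obtain ⟨l, hl⟩ := exists_isGrundyDomSeq G
  obtain ⟨p, hp, hfresh, hcov⟩ := exists_not_subset_take_and_subset_take_succ
    ⟨x, self_mem_closedNeighborSet x⟩ (hl.closedNeighborSet_subset x)
  exact ⟨l.set p x, hl.set (hl.1.set hfresh hcov), List.mem_set hp x⟩
end

section
/- A finite simple graph G has exactly one Grundy total dominating set if and only if γ_gr^t(G) = n(G) − i(G), where n(G) is the number of vertices of G and i(G) is the number of isolated vertices of G. -/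
/-- An open neighborhood sequence in `G`: a list of distinct vertices such that each
vertex has a neighbor which is not a neighbor of any earlier vertex. -/
def IsOpenNbrSeq {V : Type*} (G : SimpleGraph V) (l : List V) : Prop :=
  l.Nodup ∧ ∀ i : Fin l.length, ∃ w : V, G.Adj (l.get i) w ∧
    ∀ j : Fin l.length, (j : ℕ) < (i : ℕ) → ¬ G.Adj (l.get j) w

/-- The Grundy total domination number of `G`: the maximum length of an open
neighborhood sequence in `G`. -/
noncomputable def grundyTotalNum {V : Type*} (G : SimpleGraph V) : ℕ :=
  sSup {k : ℕ | ∃ l : List V, IsOpenNbrSeq G l ∧ l.length = k}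

/-- A Grundy total dominating sequence: an open neighborhood sequence of maximum
length. -/
def IsGrundyTotalDomSeq {V : Type*} (G : SimpleGraph V) (l : List V) : Prop :=
  IsOpenNbrSeq G l ∧ ∀ l' : List V, IsOpenNbrSeq G l' → l'.length ≤ l.length

/-- A Grundy total dominating set of `G`: the set of vertices of some Grundy total
dominating sequence of `G`. -/
def IsGrundyTotalDomSet {V : Type*} (G : SimpleGraph V) (A : Set V) : Prop :=
  ∃ l : List V, IsGrundyTotalDomSeq G l ∧ {v : V | v ∈ l} = A

/-- `G` is an iso-unique Grundy total domination graph: any two Grundy total dominating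
sets are mapped to each other by some graph automorphism. -/
def IsoUniqueGrundyTotalDom {V : Type*} (G : SimpleGraph V) : Prop :=
  ∀ A B : Set V, IsGrundyTotalDomSet G A → IsGrundyTotalDomSet G B →
    ∃ φ : G ≃g G, ⇑φ '' A = B

/-!
The vertices of an open neighbourhood sequence are distinct and non-isolated, so
`γ_gr^t(G) ≤ n(G) - i(G)`, with equality iff every Grundy total dominating set is the set of all
non-isolated vertices. For the converse, a non-isolated vertex `u` missing from a Grundy total
dominating sequence `(v₁, …, v_k)` can be exchanged into it: by maximality
`N(u) ⊆ N(v₁) ∪ ⋯ ∪ N(v_k)`, and replacing by `u` the first `v_q` with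
`N(u) ⊆ N(v₁) ∪ ⋯ ∪ N(v_q)` gives an open neighbourhood sequence of the same length.
-/

theorem List.exists_eq_append_cons_of_not {α : Type*} {P : List α → Prop} {l : List α}
    (h_nil : P []) (hl : ¬ P l) : ∃ a x b, l = a ++ x :: b ∧ P a ∧ ¬ P (a ++ [x]) := by
  induction l using List.reverseRecOn with
  | nil => exact absurd h_nil hl
  | append_singleton l y ih =>
    by_cases h : P l
    · exact ⟨l, y, [], rfl, h, hl⟩
    · obtain ⟨a, x, b, rfl, ha, hx⟩ := ih h
      exact ⟨a, x, b ++ [y], by simp, ha, hx⟩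

lemma List.Nodup.ncard_setOf_mem {α : Type*} {l : List α} (hl : l.Nodup) :
    {a | a ∈ l}.ncard = l.length := by
  classical
  rw [← List.coe_toFinset, Set.ncard_coe_finset, List.toFinset_card_of_nodup hl]

namespace SimpleGraph

variable {V : Type*} (G : SimpleGraph V)

def HasNewNbr (s : List V) (v : V) : Prop :=
  ∃ w, G.Adj v w ∧ ∀ x ∈ s, ¬ G.Adj x w

variable {G}

lemma hasNewNbr_nil {v w : V} (h : G.Adj v w) : G.HasNewNbr [] v :=
  ⟨w, h, by simp⟩

lemma HasNewNbr.exchange {a c : List V} {x u y : V} (hu : ¬ G.HasNewNbr (a ++ [x]) u)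
    (hy : G.HasNewNbr (a ++ x :: c) y) : G.HasNewNbr (a ++ u :: c) y := by
  obtain ⟨w, hyw, hw⟩ := hy
  refine ⟨w, hyw, fun z hz huw => ?_⟩
  simp only [List.mem_append, List.mem_cons] at hz
  rcases hz with hz | rfl | hz
  · exact hw z (by simp [hz]) huw
  · exact hu ⟨w, huw, fun z' hz' => hw z' (by simp at hz' ⊢; tauto)⟩
  · exact hw z (by simp [hz]) huw

end SimpleGraph

section

open SimpleGraph

variable {V : Type*} {G : SimpleGraph V}

lemma isOpenNbrSeq_iff_take {l : List V} :
    IsOpenNbrSeq G l ↔ l.Nodup ∧ ∀ i (hi : i < l.length), G.HasNewNbr (l.take i) l[i] := by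
  refine and_congr_right fun _ => ?_
  rw [Fin.forall_iff]
  refine forall₂_congr fun i hi => exists_congr fun w => and_congr_right fun _ => ?_
  simp only [List.mem_take_iff_getElem, Fin.forall_iff, List.get_eq_getElem]
  constructor
  · rintro h _ ⟨j, hj, rfl⟩
    exact h j (by omega) (by omega)
  · intro h j hjl hji
    exact h _ ⟨j, by omega, rfl⟩

lemma isOpenNbrSeq_nil : IsOpenNbrSeq G ([] : List V) :=
  ⟨List.nodup_nil, fun i => i.elim0⟩

lemma isOpenNbrSeq_append_singleton {l : List V} {v : V} :
    IsOpenNbrSeq G (l ++ [v]) ↔ IsOpenNbrSeq G l ∧ v ∉ l ∧ G.HasNewNbr l v := by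
  have hprefix : ∀ i (hi : i < l.length),
      G.HasNewNbr ((l ++ [v]).take i) ((l ++ [v])[i]'(by simp; omega)) ↔
        G.HasNewNbr (l.take i) l[i] := fun i hi => by
    rw [List.take_append_of_le_length hi.le, List.getElem_append_left hi]
  have hlast : G.HasNewNbr ((l ++ [v]).take l.length) (l ++ [v])[l.length] ↔ G.HasNewNbr l v := by
    simp
  simp only [isOpenNbrSeq_iff_take, List.nodup_append, List.nodup_singleton, List.length_append,
    List.length_singleton, Nat.forall_lt_succ_right', hlast]
  rw [forall₂_congr hprefix]
  grind

lemma IsOpenNbrSeq.exchange {a b : List V} {x u : V} (hl : IsOpenNbrSeq G (a ++ x :: b))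
    (hul : u ∉ a ++ x :: b) (ha : G.HasNewNbr a u) (hax : ¬ G.HasNewNbr (a ++ [x]) u) :
    IsOpenNbrSeq G (a ++ u :: b) := by
  induction b using List.reverseRecOn with
  | nil =>
    have hx := isOpenNbrSeq_append_singleton.1 hl
    exact isOpenNbrSeq_append_singleton.2 ⟨hx.1, by simp_all, ha⟩
  | append_singleton b y ih =>
    rw [← List.cons_append, ← List.append_assoc] at hl ⊢
    obtain ⟨hl, hyl, hy⟩ := isOpenNbrSeq_append_singleton.1 hl
    refine isOpenNbrSeq_append_singleton.2 ⟨ih hl (by simp_all), ?_, hy.exchange hax⟩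
    simp only [List.mem_append, List.mem_cons] at hul hyl ⊢
    rintro (h | rfl | h) <;> simp_all

lemma IsOpenNbrSeq.setOf_mem_subset {l : List V} (hl : IsOpenNbrSeq G l) :
    {v | v ∈ l} ⊆ {v | ∀ w, ¬ G.Adj v w}ᶜ := fun v hv hiso => by
  obtain ⟨i, hi, rfl⟩ := List.getElem_of_mem hv
  obtain ⟨w, hw, -⟩ := (isOpenNbrSeq_iff_take.1 hl).2 i hi
  exact hiso w hw

namespace IsGrundyTotalDomSeq

variable {l : List V}

lemma grundyTotalNum_eq (hl : IsGrundyTotalDomSeq G l) : grundyTotalNum G = l.length :=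
  IsGreatest.csSup_eq ⟨⟨l, hl.1, rfl⟩, by rintro _ ⟨m, hm, rfl⟩; exact hl.2 m hm⟩

lemma not_hasNewNbr (hl : IsGrundyTotalDomSeq G l) {u : V} (hul : u ∉ l) :
    ¬ G.HasNewNbr l u := fun h => by
  simpa using hl.2 _ (isOpenNbrSeq_append_singleton.2 ⟨hl.1, hul, h⟩)

lemma exists_mem_of_adj (hl : IsGrundyTotalDomSeq G l) {u w : V} (huw : G.Adj u w) :
    ∃ l', IsGrundyTotalDomSeq G l' ∧ u ∈ l' := by
  by_cases hul : u ∈ l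
  · exact ⟨l, hl, hul⟩
  obtain ⟨a, x, b, rfl, ha, hax⟩ :=
    List.exists_eq_append_cons_of_not (P := (G.HasNewNbr · u)) (hasNewNbr_nil huw)
      (hl.not_hasNewNbr hul)
  refine ⟨a ++ u :: b, ⟨hl.1.exchange hul ha hax, fun m hm => ?_⟩, by simp⟩
  simpa using hl.2 m hm

end IsGrundyTotalDomSeq

lemma exists_isGrundyTotalDomSeq [Finite V] (G : SimpleGraph V) :
    ∃ l, IsGrundyTotalDomSeq G l := by
  have := Fintype.ofFinite V
  set S := {k | ∃ l : List V, IsOpenNbrSeq G l ∧ l.length = k}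
  have hbdd : BddAbove S := by
    refine ⟨Fintype.card V, ?_⟩
    rintro _ ⟨l, hl, rfl⟩
    exact hl.1.length_le_card
  obtain ⟨l, hl, hlen⟩ := Nat.sSup_mem (s := S) ⟨0, [], isOpenNbrSeq_nil, rfl⟩ hbdd
  exact ⟨l, hl, fun m hm => hlen ▸ le_csSup hbdd ⟨m, hm, rfl⟩⟩

end

/-- A finite graph `G` has exactly one Grundy total dominating set iff its Grundy total
domination number equals the number of vertices minus the number of isolated
vertices. -/
theorem unique_grundyTotalDomSet_iff {V : Type*} [Fintype V] (G : SimpleGraph V) :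
    (∃! A : Set V, IsGrundyTotalDomSet G A) ↔
      grundyTotalNum G = Fintype.card V - ({v : V | ∀ w : V, ¬ G.Adj v w} : Set V).ncard := by
  rw [← Nat.card_eq_fintype_card, ← Set.ncard_compl]
  obtain ⟨l₀, hl₀⟩ := exists_isGrundyTotalDomSeq G
  rw [hl₀.grundyTotalNum_eq]
  constructor
  · rintro ⟨A, -, hA⟩
    have hset : ∀ l, IsGrundyTotalDomSeq G l → {v | v ∈ l} = A :=
      fun l hl => hA _ ⟨l, hl, rfl⟩
    have hl₀_eq : {v | v ∈ l₀} = {v | ∀ w, ¬ G.Adj v w}ᶜ := by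
      refine hl₀.1.setOf_mem_subset.antisymm fun u hu => ?_
      obtain ⟨w, huw⟩ : ∃ w, G.Adj u w := by simpa using hu
      obtain ⟨l, hl, hul⟩ := hl₀.exists_mem_of_adj huw
      rwa [hset l₀ hl₀, ← hset l hl]
    rw [← hl₀.1.1.ncard_setOf_mem, hl₀_eq]
  · intro h
    have hset : ∀ l, IsGrundyTotalDomSeq G l → {v | v ∈ l} = {v | ∀ w, ¬ G.Adj v w}ᶜ :=
      fun l hl => Set.eq_of_subset_of_ncard_le hl.1.setOf_mem_subset <| by
        rw [hl.1.1.ncard_setOf_mem, ← h, ← hl.grundyTotalNum_eq, hl₀.grundyTotalNum_eq]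
    exact ⟨_, ⟨l₀, hl₀, hset l₀ hl₀⟩, fun B ⟨l, hl, hB⟩ => hB ▸ hset l hl⟩
end
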